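/- arXiv:1003.5826 — 2 statements merged into one kernel-verified Lean document; each statement's English description precedes it below -/
import Mathlib

section
/- Let L : ℝⁿ × ℝⁿ → ℝ be C¹ (autonomous Lagrangian) and let q : [a,b] → ℝⁿ be a C¹ local minimizer of I[q] = ∫_a^b L(q(t), q'(t)) dt among C¹ curves with fixed endpoints, such that t ↦ ∂₂L(q(t), q'(t)) is differentiable. Then the second Erdmann condition holds: the function t ↦ -L(q(t), q'(t)) + ∂₂L(q(t), q'(t)) · q'(t) is constant on [a,b]. -/
/-!
Inner variations. For continuous `η` with `∫_a^b η = 0` and small `ε`, reparametrize `q` by the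
inverse `σ_ε` of the time change `s ↦ s + ε ∫_a^s η`, which fixes `a` and `b`. The curves
`q ∘ σ_ε` are admissible competitors, C¹-close to `q`, and substituting `s = σ_ε t` turns their
action into `∫_a^b (1 + εη) L(q, q' / (1 + εη))`, whose derivative at `ε = 0` is `-∫_a^b η E`,
with `E = ∂₂L(q, q') · q' - L(q, q')` the energy along `q`. Minimality makes it vanish for every
such `η`, and testing with `η = E - (mean of E)` gives `∫_a^b (E - mean)² = 0`.
-/

open Set intervalIntegral Filter Topology Metric
open scoped RealInnerProductSpace

theorem hasDerivAt_intervalIntegral_of_continuousOn {F F' : ℝ → ℝ → ℝ} {a b x₀ r : ℝ}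
    (hr : 0 < r) (hF : ∀ x ∈ closedBall x₀ r, ContinuousOn (F x) (uIcc a b))
    (hF' : ContinuousOn (Function.uncurry F') (closedBall x₀ r ×ˢ uIcc a b))
    (hderiv : ∀ x ∈ closedBall x₀ r, ∀ t ∈ uIcc a b, HasDerivAt (F · t) (F' x t) x) :
    HasDerivAt (fun x ↦ ∫ t in a..b, F x t) (∫ t in a..b, F' x₀ t) x₀ := by
  obtain ⟨C, hC⟩ :=
    ((isCompact_closedBall x₀ r).prod isCompact_uIcc).exists_bound_of_continuousOn hF'
  have hx₀ : x₀ ∈ closedBall x₀ r := mem_closedBall_self hr.le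
  refine (hasDerivAt_integral_of_dominated_loc_of_deriv_le (bound := fun _ ↦ C)
    (ball_mem_nhds x₀ hr) ?_ (hF x₀ hx₀).intervalIntegrable ?_ ?_ intervalIntegrable_const ?_).2
  · filter_upwards [ball_mem_nhds x₀ hr] with x hx
    exact ((hF x (ball_subset_closedBall hx)).mono uIoc_subset_uIcc).aestronglyMeasurable
      measurableSet_uIoc
  · refine ((hF'.comp (continuousOn_const.prodMk continuousOn_id) fun t ht ↦ ⟨hx₀, ht⟩).mono
      uIoc_subset_uIcc).aestronglyMeasurable measurableSet_uIoc
  · exact MeasureTheory.ae_of_all _ fun t ht x hx ↦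
      hC (x, t) ⟨ball_subset_closedBall hx, uIoc_subset_uIcc ht⟩
  · exact MeasureTheory.ae_of_all _ fun t ht x hx ↦
      hderiv x (ball_subset_closedBall hx) t (uIoc_subset_uIcc ht)

theorem exists_eqOn_const_of_integral_mul_eq_zero {a b : ℝ} (hab : a < b) {f : ℝ → ℝ}
    (hf : Continuous f) (h : ∀ η : ℝ → ℝ, Continuous η → (∃ M, ∀ s, |η s| ≤ M) →
      ∫ s in a..b, η s = 0 → ∫ s in a..b, η s * f s = 0) :
    ∃ c, ∀ s ∈ Icc a b, f s = c := by
  set c := (b - a)⁻¹ * ∫ s in a..b, f s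
  set η : ℝ → ℝ := fun s ↦ f (projIcc a b hab.le s) - c
  have hη : ∀ s ∈ uIcc a b, η s = f s - c := fun s hs ↦ by
    rw [uIcc_of_le hab.le] at hs
    simp [η, projIcc_of_mem _ hs]
  have hηc : Continuous η :=
    (hf.comp (continuous_subtype_val.comp continuous_projIcc)).sub continuous_const
  have hηM : ∃ M, ∀ s, |η s| ≤ M := by
    obtain ⟨C, hC⟩ := isCompact_Icc.exists_bound_of_continuousOn (hf.continuousOn (s := Icc a b))
    refine ⟨C + |c|, fun s ↦ ?_⟩
    have hfC := hC _ (projIcc a b hab.le s).2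
    rw [Real.norm_eq_abs] at hfC
    linarith [abs_sub (f (projIcc a b hab.le s)) c]
  have hmean : ∫ s in a..b, (f s - c) = 0 := by
    rw [integral_sub (hf.intervalIntegrable _ _) intervalIntegrable_const, integral_const,
      smul_eq_mul, mul_inv_cancel_left₀ (sub_ne_zero.2 hab.ne'), sub_self]
  have horth := h η hηc hηM ((integral_congr hη).trans hmean)
  have hsq : ∫ s in a..b, (f s - c) ^ 2 = 0 := by
    calc ∫ s in a..b, (f s - c) ^ 2 = ∫ s in a..b, (η s * f s - c * (f s - c)) :=
          integral_congr fun s hs ↦ by simp only [hη s hs]; ring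
      _ = 0 := by
        rw [integral_sub (f := fun s ↦ η s * f s) (g := fun s ↦ c * (f s - c))
          ((hηc.mul hf).intervalIntegrable _ _)
          ((continuous_const.mul (hf.sub continuous_const)).intervalIntegrable _ _),
          integral_const_mul, horth, hmean, mul_zero, sub_zero]
  refine ⟨c, fun s hs ↦ ?_⟩
  by_contra hne
  have hne' : f s - c ≠ 0 := sub_ne_zero.2 hne
  exact (integral_pos hab ((hf.sub continuous_const).pow 2).continuousOn
    (fun _ _ ↦ sq_nonneg _) ⟨s, hs, show 0 < (f s - c) ^ 2 by positivity⟩).ne' hsq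

noncomputable def timeChange (η : ℝ → ℝ) (a ε s : ℝ) : ℝ := s + ε * ∫ x in a..s, η x

-- A genuine inverse only where `timeChange η a ε` is bijective, e.g. when `|ε| * sup |η| ≤ 1 / 2`.
noncomputable def timeChangeInv (η : ℝ → ℝ) (a ε : ℝ) : ℝ → ℝ :=
  Function.invFun (timeChange η a ε)

section TimeChange

variable {η : ℝ → ℝ} {a b M ε : ℝ}

lemma hasDerivAt_timeChange (hη : Continuous η) (s : ℝ) :
    HasDerivAt (timeChange η a ε) (1 + ε * η s) s :=
  (hasDerivAt_id s).add <| (integral_hasDerivAt_right (hη.intervalIntegrable _ _)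
    (hη.stronglyMeasurableAtFilter _ _) hη.continuousAt).const_mul ε

lemma timeChange_left : timeChange η a ε a = a := by simp [timeChange]

lemma timeChange_right (hη₀ : ∫ x in a..b, η x = 0) : timeChange η a ε b = b := by
  simp [timeChange, hη₀]

lemma abs_timeChange_sub_le (hM : ∀ s, |η s| ≤ M) (s : ℝ) :
    |timeChange η a ε s - s| ≤ |ε| * M * |s - a| := by
  have hH : |∫ x in a..s, η x| ≤ M * |s - a| :=
    norm_integral_le_of_norm_le_const fun x _ ↦ (Real.norm_eq_abs _).trans_le (hM x)
  rw [timeChange, add_sub_cancel_left, abs_mul, mul_assoc]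
  exact mul_le_mul_of_nonneg_left hH (abs_nonneg ε)

lemma half_le_one_add_mul (hM : ∀ s, |η s| ≤ M) (hε : |ε| * M ≤ 1 / 2) (s : ℝ) :
    1 / 2 ≤ 1 + ε * η s := by
  have : |ε * η s| ≤ 1 / 2 := by
    rw [abs_mul]
    exact (mul_le_mul_of_nonneg_left (hM s) (abs_nonneg ε)).trans hε
  linarith [neg_abs_le (ε * η s)]

lemma strictMono_timeChange (hη : Continuous η) (hM : ∀ s, |η s| ≤ M) (hε : |ε| * M ≤ 1 / 2) :
    StrictMono (timeChange η a ε) :=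
  strictMono_of_hasDerivAt_pos (hasDerivAt_timeChange hη) fun s ↦
    one_half_pos.trans_le (half_le_one_add_mul hM hε s)

lemma surjective_timeChange (hη : Continuous η) (hM : ∀ s, |η s| ≤ M) (hε : |ε| * M ≤ 1 / 2) :
    Function.Surjective (timeChange η a ε) := by
  have hclose : ∀ s, |timeChange η a ε s - s| ≤ |s - a| / 2 := fun s ↦
    (abs_timeChange_sub_le hM s).trans (by nlinarith [abs_nonneg (s - a)])
  refine Continuous.surjective
    (continuous_iff_continuousAt.2 fun s ↦ (hasDerivAt_timeChange hη s).continuousAt) ?_ ?_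
  · refine tendsto_atTop_mono' _ ?_ ((tendsto_id.atTop_add tendsto_const_nhds).atTop_div_const
      two_pos : Tendsto (fun s : ℝ ↦ (s + a) / 2) atTop atTop)
    filter_upwards [eventually_ge_atTop a] with s hs
    have := (abs_le.1 (hclose s)).1
    rw [abs_of_nonneg (sub_nonneg.2 hs)] at this
    linarith
  · refine tendsto_atBot_mono' _ ?_ ((tendsto_id.atBot_add tendsto_const_nhds).atBot_div_const
      two_pos : Tendsto (fun s : ℝ ↦ (s + a) / 2) atBot atBot)
    filter_upwards [eventually_le_atBot a] with s hs
    have := (abs_le.1 (hclose s)).2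
    rw [abs_of_nonpos (sub_nonpos.2 hs)] at this
    linarith

lemma timeChange_timeChangeInv (hη : Continuous η) (hM : ∀ s, |η s| ≤ M) (hε : |ε| * M ≤ 1 / 2)
    (t : ℝ) : timeChange η a ε (timeChangeInv η a ε t) = t :=
  Function.rightInverse_invFun (surjective_timeChange hη hM hε) t

lemma timeChangeInv_timeChange (hη : Continuous η) (hM : ∀ s, |η s| ≤ M) (hε : |ε| * M ≤ 1 / 2)
    (s : ℝ) : timeChangeInv η a ε (timeChange η a ε s) = s :=
  Function.leftInverse_invFun (strictMono_timeChange hη hM hε).injective s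

lemma timeChangeInv_left (hη : Continuous η) (hM : ∀ s, |η s| ≤ M) (hε : |ε| * M ≤ 1 / 2) :
    timeChangeInv η a ε a = a := by
  simpa only [timeChange_left] using timeChangeInv_timeChange (a := a) hη hM hε a

lemma timeChangeInv_right (hη : Continuous η) (hM : ∀ s, |η s| ≤ M) (hε : |ε| * M ≤ 1 / 2)
    (hη₀ : ∫ x in a..b, η x = 0) : timeChangeInv η a ε b = b := by
  simpa only [timeChange_right hη₀] using timeChangeInv_timeChange (a := a) hη hM hε b

lemma monotone_timeChangeInv (hη : Continuous η) (hM : ∀ s, |η s| ≤ M) (hε : |ε| * M ≤ 1 / 2) :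
    Monotone (timeChangeInv η a ε) := fun t t' htt' ↦ by
  rwa [← (strictMono_timeChange hη hM hε).le_iff_le, timeChange_timeChangeInv hη hM hε,
    timeChange_timeChangeInv hη hM hε]

lemma continuous_timeChangeInv (hη : Continuous η) (hM : ∀ s, |η s| ≤ M) (hε : |ε| * M ≤ 1 / 2) :
    Continuous (timeChangeInv η a ε) :=
  (monotone_timeChangeInv hη hM hε).continuous_of_surjective fun s ↦
    ⟨_, timeChangeInv_timeChange hη hM hε s⟩

lemma hasDerivAt_timeChangeInv (hη : Continuous η) (hM : ∀ s, |η s| ≤ M) (hε : |ε| * M ≤ 1 / 2)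
    (t : ℝ) : HasDerivAt (timeChangeInv η a ε) (1 + ε * η (timeChangeInv η a ε t))⁻¹ t :=
  (hasDerivAt_timeChange hη _).of_local_left_inverse
    (continuous_timeChangeInv hη hM hε).continuousAt
    (one_half_pos.trans_le (half_le_one_add_mul hM hε _)).ne'
    (Eventually.of_forall (timeChange_timeChangeInv hη hM hε))

lemma abs_timeChangeInv_sub_le (hη : Continuous η) (hM : ∀ s, |η s| ≤ M)
    (hε : |ε| * M ≤ 1 / 2) (t : ℝ) : |timeChangeInv η a ε t - t| ≤ 2 * |ε| * M * |t - a| := by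
  set σ := timeChangeInv η a ε t
  have h := abs_timeChange_sub_le (a := a) (ε := ε) hM σ
  rw [timeChange_timeChangeInv hη hM hε, abs_sub_comm] at h
  have hεM : 0 ≤ |ε| * M := mul_nonneg (abs_nonneg ε) ((abs_nonneg _).trans (hM 0))
  have : |σ - t| ≤ |ε| * M * |σ - t| + |ε| * M * |t - a| := by
    nlinarith [abs_sub_le σ t a]
  nlinarith [abs_nonneg (σ - t)]

lemma integral_comp_timeChangeInv (hη : Continuous η) (hM : ∀ s, |η s| ≤ M)
    (hε : |ε| * M ≤ 1 / 2) (hη₀ : ∫ x in a..b, η x = 0) {g : ℝ → ℝ} (hg : Continuous g) :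
    ∫ t in a..b, g (timeChangeInv η a ε t) = ∫ s in a..b, (1 + ε * η s) * g s := by
  have := integral_deriv_smul_comp (a := a) (b := b)
    (fun s _ ↦ hasDerivAt_timeChange (a := a) (ε := ε) hη s)
    (continuous_const.add (continuous_const.mul hη)).continuousOn
    (hg.comp (continuous_timeChangeInv (a := a) hη hM hε))
  rw [timeChange_left, timeChange_right hη₀] at this
  refine this.symm.trans (integral_congr fun s _ ↦ ?_)
  simp [timeChangeInv_timeChange hη hM hε]

lemma eventually_abs_mul_le_half (M : ℝ) : ∀ᶠ ε in 𝓝 (0 : ℝ), |ε| * M ≤ 1 / 2 :=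
  ((continuous_abs.mul continuous_const).tendsto' 0 0 (by simp)).eventually
    (eventually_le_nhds one_half_pos)

lemma tendsto_timeChangeInv (hη : Continuous η) (hM : ∀ s, |η s| ≤ M) (t₀ : ℝ) :
    Tendsto (fun x : ℝ × ℝ ↦ timeChangeInv η a x.1 x.2) (𝓝 (0, t₀)) (𝓝 t₀) := by
  have hbound : Tendsto (fun x : ℝ × ℝ ↦ |x.2 - t₀| + 2 * |x.1| * M * |x.2 - a|) (𝓝 (0, t₀))
      (𝓝 0) :=
    (by fun_prop : Continuous fun x : ℝ × ℝ ↦ |x.2 - t₀| + 2 * |x.1| * M * |x.2 - a|).tendsto'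
      _ _ (by simp)
  rw [tendsto_iff_norm_sub_tendsto_zero]
  refine squeeze_zero' (Eventually.of_forall fun _ ↦ norm_nonneg _) ?_ hbound
  filter_upwards [(continuous_fst.tendsto (0, t₀)).eventually (eventually_abs_mul_le_half M)]
    with x hx
  rw [Real.norm_eq_abs]
  linarith [abs_sub_le (timeChangeInv η a x.1 x.2) x.2 t₀,
    abs_timeChangeInv_sub_le (a := a) hη hM hx x.2]

end TimeChange

section Lagrangian

variable {E : Type*} [NormedAddCommGroup E] [NormedSpace ℝ E] {L : E × E → ℝ}

noncomputable def lagrangianEnergy (L : E × E → ℝ) (z : E × E) : ℝ :=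
  fderiv ℝ L z (0, z.2) - L z

lemma continuous_lagrangianEnergy (hL : ContDiff ℝ 1 L) : Continuous (lagrangianEnergy L) :=
  ((hL.continuous_fderiv one_ne_zero).clm_apply (continuous_const.prodMk continuous_snd)).sub
    hL.continuous

lemma hasDerivAt_mul_apply_inv_smul (hL : Differentiable ℝ L) (x v : E) {μ : ℝ} (hμ : μ ≠ 0) :
    HasDerivAt (fun μ : ℝ ↦ μ * L (x, μ⁻¹ • v)) (-lagrangianEnergy L (x, μ⁻¹ • v)) μ := by
  have hcurve : HasDerivAt (fun μ : ℝ ↦ (x, μ⁻¹ • v)) ((0 : E), (-(μ ^ 2)⁻¹) • v) μ :=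
    (hasDerivAt_const μ x).prodMk ((hasDerivAt_inv hμ).smul_const v)
  refine ((hasDerivAt_id μ).mul ((hL _).hasFDerivAt.comp_hasDerivAt μ hcurve)).congr_deriv ?_
  have : ((0 : E), (-(μ ^ 2)⁻¹) • v) = (-μ⁻¹) • ((0 : E), μ⁻¹ • v) := by
    simp [smul_smul, pow_two]
  rw [this, map_smul, smul_eq_mul, lagrangianEnergy, ← mul_assoc, mul_neg, id, mul_inv_cancel₀ hμ]
  simp only [Function.comp_apply]
  ring

lemma fderiv_apply_zero_left_of_hasFDerivAt {L' : E →L[ℝ] ℝ} {u v : E}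
    (hL : DifferentiableAt ℝ L (u, v)) (h : HasFDerivAt (fun v' ↦ L (u, v')) L' v) (w : E) :
    fderiv ℝ L (u, v) (0, w) = L' w := by
  rw [h.unique (hL.hasFDerivAt.comp v (hasFDerivAt_prodMk_right u v))]
  rfl

noncomputable def action (L : E × E → ℝ) (a b : ℝ) (p : ℝ → E) : ℝ :=
  ∫ t in a..b, L (p t, deriv p t)

def IsWeakLocalMinimizer (L : E × E → ℝ) (a b : ℝ) (q : ℝ → E) : Prop :=
  ∃ δ > 0, ∀ p : ℝ → E, ContDiff ℝ 1 p → p a = q a → p b = q b →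
    (∀ t ∈ Icc a b, ‖p t - q t‖ + ‖deriv p t - deriv q t‖ < δ) → action L a b q ≤ action L a b p

noncomputable def innerVariation (L : E × E → ℝ) (q : ℝ → E) (η : ℝ → ℝ) (a b ε : ℝ) : ℝ :=
  ∫ s in a..b, (1 + ε * η s) * L (q s, (1 + ε * η s)⁻¹ • deriv q s)

variable {q : ℝ → E} {η : ℝ → ℝ} {a b M ε : ℝ}

lemma hasDerivAt_comp_timeChangeInv (hq : Differentiable ℝ q) (hη : Continuous η)
    (hM : ∀ s, |η s| ≤ M) (hε : |ε| * M ≤ 1 / 2) (t : ℝ) :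
    HasDerivAt (q ∘ timeChangeInv η a ε)
      ((1 + ε * η (timeChangeInv η a ε t))⁻¹ • deriv q (timeChangeInv η a ε t)) t :=
  (hq _).hasDerivAt.scomp t (hasDerivAt_timeChangeInv hη hM hε t)

lemma contDiff_comp_timeChangeInv (hq : ContDiff ℝ 1 q) (hη : Continuous η)
    (hM : ∀ s, |η s| ≤ M) (hε : |ε| * M ≤ 1 / 2) : ContDiff ℝ 1 (q ∘ timeChangeInv η a ε) := by
  have hd := hasDerivAt_comp_timeChangeInv (a := a) (hq.differentiable one_ne_zero) hη hM hε
  have hσ := continuous_timeChangeInv (a := a) hη hM hε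
  rw [contDiff_one_iff_deriv, funext fun t ↦ (hd t).deriv]
  refine ⟨fun t ↦ (hd t).differentiableAt, ?_⟩
  exact ((continuous_const.add (continuous_const.mul (hη.comp hσ))).inv₀ fun t ↦
    (one_half_pos.trans_le (half_le_one_add_mul hM hε _)).ne').smul
    ((hq.continuous_deriv le_rfl).comp hσ)

lemma innerVariation_eq_action (hL : Continuous L) (hq : ContDiff ℝ 1 q) (hη : Continuous η)
    (hM : ∀ s, |η s| ≤ M) (hε : |ε| * M ≤ 1 / 2) (hη₀ : ∫ x in a..b, η x = 0) :
    innerVariation L q η a b ε = action L a b (q ∘ timeChangeInv η a ε) := by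
  have hd := hasDerivAt_comp_timeChangeInv (a := a) (hq.differentiable one_ne_zero) hη hM hε
  have hg : Continuous fun s ↦ L (q s, (1 + ε * η s)⁻¹ • deriv q s) :=
    hL.comp (hq.continuous.prodMk (((continuous_const.add (continuous_const.mul hη)).inv₀
      fun s ↦ (one_half_pos.trans_le (half_le_one_add_mul hM hε s)).ne').smul
      (hq.continuous_deriv le_rfl)))
  simp only [action, (hd _).deriv, Function.comp_apply]
  exact (integral_comp_timeChangeInv hη hM hε hη₀ hg).symm

lemma eventually_comp_timeChangeInv_near (hq : ContDiff ℝ 1 q) (hη : Continuous η)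
    (hM : ∀ s, |η s| ≤ M) {δ : ℝ} (hδ : 0 < δ) :
    ∀ᶠ ε in 𝓝 0, ∀ t ∈ Icc a b, ‖q (timeChangeInv η a ε t) - q t‖ +
      ‖(1 + ε * η (timeChangeInv η a ε t))⁻¹ • deriv q (timeChangeInv η a ε t) - deriv q t‖
        < δ := by
  refine isCompact_Icc.eventually_forall_of_forall_eventually fun t₀ _ ↦ ?_
  have hσ := tendsto_timeChangeInv (a := a) hη hM t₀
  have hsnd : Tendsto (fun x : ℝ × ℝ ↦ x.2) (𝓝 (0, t₀)) (𝓝 t₀) := continuous_snd.tendsto _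
  have hfst : Tendsto (fun x : ℝ × ℝ ↦ x.1) (𝓝 (0, t₀)) (𝓝 0) := continuous_fst.tendsto _
  have hfactor : Tendsto (fun x : ℝ × ℝ ↦ (1 + x.1 * η (timeChangeInv η a x.1 x.2))⁻¹)
      (𝓝 (0, t₀)) (𝓝 1) := by
    simpa using (tendsto_const_nhds.add (hfst.mul ((hη.tendsto t₀).comp hσ))).inv₀
      (by simp : (1 : ℝ) + 0 * η t₀ ≠ 0)
  have hq' := (hq.continuous_deriv le_rfl).tendsto t₀
  have hlim := (((hq.continuous.tendsto t₀).comp hσ).sub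
    ((hq.continuous.tendsto t₀).comp hsnd)).norm.add
    (((hfactor.smul (hq'.comp hσ)).sub (hq'.comp hsnd)).norm)
  simp only [one_smul, sub_self, norm_zero, add_zero] at hlim
  exact hlim.eventually (eventually_lt_nhds hδ)

lemma IsWeakLocalMinimizer.isLocalMin_innerVariation (hmin : IsWeakLocalMinimizer L a b q)
    (hL : Continuous L) (hq : ContDiff ℝ 1 q) (hη : Continuous η) (hM : ∀ s, |η s| ≤ M)
    (hη₀ : ∫ x in a..b, η x = 0) : IsLocalMin (innerVariation L q η a b) 0 := by
  obtain ⟨δ, hδ, hmin⟩ := hmin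
  filter_upwards [eventually_abs_mul_le_half M, eventually_comp_timeChangeInv_near hq hη hM hδ]
    with ε hε hnear
  have h₀ : innerVariation L q η a b 0 = action L a b q := by simp [innerVariation, action]
  rw [h₀, innerVariation_eq_action hL hq hη hM hε hη₀]
  refine hmin _ (contDiff_comp_timeChangeInv hq hη hM hε)
    (by simp [timeChangeInv_left hη hM hε]) (by simp [timeChangeInv_right hη hM hε hη₀])
    fun t ht ↦ ?_
  rw [(hasDerivAt_comp_timeChangeInv (hq.differentiable one_ne_zero) hη hM hε t).deriv]
  exact hnear t ht

lemma hasDerivAt_innerVariation (hL : ContDiff ℝ 1 L) (hq : ContDiff ℝ 1 q) (hη : Continuous η)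
    (hM : ∀ s, |η s| ≤ M) :
    HasDerivAt (innerVariation L q η a b)
      (-∫ s in a..b, η s * lagrangianEnergy L (q s, deriv q s)) 0 := by
  obtain ⟨r, hr, hrM⟩ := Metric.eventually_nhds_iff.1 (eventually_abs_mul_le_half M)
  have hne : ∀ x ∈ closedBall (0 : ℝ) (r / 2), ∀ s, 1 + x * η s ≠ 0 := fun x hx s ↦
    (one_half_pos.trans_le (half_le_one_add_mul hM (hrM (by rw [mem_closedBall] at hx; linarith))
      s)).ne'
  have hq' := hq.continuous_deriv le_rfl
  have hden : ContinuousOn (fun z : ℝ × ℝ ↦ (1 + z.1 * η z.2)⁻¹)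
      (closedBall 0 (r / 2) ×ˢ uIcc a b) :=
    (by fun_prop : Continuous fun z : ℝ × ℝ ↦ 1 + z.1 * η z.2).continuousOn.inv₀
      fun z hz ↦ hne z.1 hz.1 z.2
  have key := hasDerivAt_intervalIntegral_of_continuousOn (a := a) (b := b)
    (F := fun x s ↦ (1 + x * η s) * L (q s, (1 + x * η s)⁻¹ • deriv q s))
    (F' := fun x s ↦ -lagrangianEnergy L (q s, (1 + x * η s)⁻¹ • deriv q s) * η s)
    (half_pos hr)
    (fun x hx ↦ ((continuous_const.add (continuous_const.mul hη)).mul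
      (hL.continuous.comp (hq.continuous.prodMk (((continuous_const.add
        (continuous_const.mul hη)).inv₀ (hne x hx)).smul hq')))).continuousOn)
    ((((continuous_lagrangianEnergy hL).comp_continuousOn
      ((hq.continuous.comp continuous_snd).continuousOn.prodMk
        (hden.smul (hq'.comp continuous_snd).continuousOn))).neg).mul
      (hη.comp continuous_snd).continuousOn)
    (fun x hx s _ ↦ by
      have h := (hasDerivAt_mul_apply_inv_smul (hL.differentiable one_ne_zero) (q s)
        (deriv q s) (hne x hx s)).comp x ((hasDerivAt_mul_const (η s)).const_add 1)
      exact h)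
  unfold innerVariation
  simpa [mul_comm] using key

theorem IsWeakLocalMinimizer.integral_mul_lagrangianEnergy_eq_zero
    (hmin : IsWeakLocalMinimizer L a b q) (hL : ContDiff ℝ 1 L) (hq : ContDiff ℝ 1 q)
    (hη : Continuous η) (hM : ∀ s, |η s| ≤ M) (hη₀ : ∫ x in a..b, η x = 0) :
    ∫ s in a..b, η s * lagrangianEnergy L (q s, deriv q s) = 0 :=
  neg_eq_zero.1 <| (hmin.isLocalMin_innerVariation hL.continuous hq hη hM hη₀).hasDerivAt_eq_zero
    (hasDerivAt_innerVariation hL hq hη hM)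

theorem IsWeakLocalMinimizer.exists_lagrangianEnergy_eqOn_const
    (hmin : IsWeakLocalMinimizer L a b q) (hab : a < b) (hL : ContDiff ℝ 1 L)
    (hq : ContDiff ℝ 1 q) : ∃ c, ∀ s ∈ Icc a b, lagrangianEnergy L (q s, deriv q s) = c :=
  exists_eqOn_const_of_integral_mul_eq_zero hab
    ((continuous_lagrangianEnergy hL).comp (hq.continuous.prodMk (hq.continuous_deriv le_rfl)))
    fun _ hη ⟨_, hM⟩ hη₀ ↦ hmin.integral_mul_lagrangianEnergy_eq_zero hL hq hη hM hη₀

end Lagrangian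

theorem second_erdmann_real_general (n : ℕ) (a b : ℝ) (hab : a < b)
    (L : EuclideanSpace ℝ (Fin n) → EuclideanSpace ℝ (Fin n) → ℝ)
    (L2 : EuclideanSpace ℝ (Fin n) → EuclideanSpace ℝ (Fin n) → EuclideanSpace ℝ (Fin n))
    (hL : ContDiff ℝ 1 (fun p : EuclideanSpace ℝ (Fin n) × EuclideanSpace ℝ (Fin n) =>
      L p.1 p.2))
    (hL2 : ∀ u v, HasGradientAt (fun v' => L u v') (L2 u v) v)
    (q : ℝ → EuclideanSpace ℝ (Fin n)) (hq : ContDiff ℝ 1 q)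
    (hmin : ∃ δ > 0, ∀ p : ℝ → EuclideanSpace ℝ (Fin n), ContDiff ℝ 1 p →
      p a = q a → p b = q b →
      (∀ t ∈ Icc a b, ‖p t - q t‖ + ‖deriv p t - deriv q t‖ < δ) →
      ∫ t in a..b, L (q t) (deriv q t) ≤ ∫ t in a..b, L (p t) (deriv p t)) :
    ∀ s ∈ Icc a b, ∀ t ∈ Icc a b,
      -L (q s) (deriv q s) + ⟪L2 (q s) (deriv q s), deriv q s⟫
        = -L (q t) (deriv q t) + ⟪L2 (q t) (deriv q t), deriv q t⟫ := by
  have henergy : ∀ t, -L (q t) (deriv q t) + ⟪L2 (q t) (deriv q t), deriv q t⟫ =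
      lagrangianEnergy (fun p ↦ L p.1 p.2) (q t, deriv q t) := fun t ↦ by
    rw [lagrangianEnergy, fderiv_apply_zero_left_of_hasFDerivAt
      ((hL.differentiable one_ne_zero) _) (hL2 _ _).hasFDerivAt,
      InnerProductSpace.toDual_apply_apply]
    ring
  obtain ⟨c, hc⟩ := IsWeakLocalMinimizer.exists_lagrangianEnergy_eqOn_const
    (L := fun p ↦ L p.1 p.2) hmin hab hL hq
  intro s hs t ht
  rw [henergy, henergy, hc s hs, hc t ht]

theorem second_erdmann_real (n : ℕ) (a b : ℝ) (hab : a < b)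
    (L : EuclideanSpace ℝ (Fin n) → EuclideanSpace ℝ (Fin n) → ℝ)
    (L1 L2 : EuclideanSpace ℝ (Fin n) → EuclideanSpace ℝ (Fin n) → EuclideanSpace ℝ (Fin n))
    (hL : ContDiff ℝ 1 (fun p : EuclideanSpace ℝ (Fin n) × EuclideanSpace ℝ (Fin n) =>
      L p.1 p.2))
    (hL1 : ∀ u v, HasGradientAt (fun u' => L u' v) (L1 u v) u)
    (hL2 : ∀ u v, HasGradientAt (fun v' => L u v') (L2 u v) v)
    (q : ℝ → EuclideanSpace ℝ (Fin n)) (hq : ContDiff ℝ 1 q)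
    (hmin : ∃ δ > 0, ∀ p : ℝ → EuclideanSpace ℝ (Fin n), ContDiff ℝ 1 p →
      p a = q a → p b = q b →
      (∀ t ∈ Icc a b, ‖p t - q t‖ + ‖deriv p t - deriv q t‖ < δ) →
      ∫ t in a..b, L (q t) (deriv q t) ≤ ∫ t in a..b, L (p t) (deriv p t))
    (hd2 : ∀ t ∈ Ioo a b, DifferentiableAt ℝ (fun s => L2 (q s) (deriv q s)) t) :
    ∀ s ∈ Icc a b, ∀ t ∈ Icc a b,
      -L (q s) (deriv q s) + ⟪L2 (q s) (deriv q s), deriv q s⟫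
        = -L (q t) (deriv q t) + ⟪L2 (q t) (deriv q t), deriv q t⟫ :=
  second_erdmann_real_general n a b hab L L2 hL hL2 q hq hmin
end

section
/- Let L : ℝ × ℝⁿ × ℝⁿ → ℝ be C¹ and let q : [a,b] → ℝⁿ be a C¹ curve satisfying both the first Euler–Lagrange equation d/dt ∂₃L(t,q(t),q'(t)) = ∂₂L(t,q(t),q'(t)) and the second Euler–Lagrange equation d/dt[-L(t,q,q') + ∂₃L(t,q,q')·q'] = -∂₁L(t,q,q') on (a,b). Suppose τ : ℝ × ℝⁿ → ℝ and ξ : ℝ × ℝⁿ → ℝⁿ are C¹ and that the invariance identity ∂₁L·τ + ∂₂L·ξ + ∂₃L·(d/dt ξ(t,q(t))) + L·(d/dt τ(t,q(t))) - (∂₃L · q')·(d/dt τ(t,q(t))) = 0 holds along q (all partials of L evaluated at (t, q(t), q'(t))). Then the Noether quantity ∂₃L(t,q,q')·ξ(t,q(t)) + [L(t,q,q') - ∂₃L(t,q,q')·q'(t)]·τ(t,q(t)) is constant on [a,b]. -/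
open Set InnerProductSpace
open scoped RealInnerProductSpace

/-!
Along a solution of both Euler–Lagrange equations, the product rule turns the derivative of the
Noether quantity `⟪∂₃L, ξ⟫ + (L - ⟪∂₃L, q'⟫) τ` into the left-hand side of the invariance
identity, so it vanishes on `(a, b)`. Since `L` is `C¹`, its partial gradient `∂₃L` is continuous,
hence so is the Noether quantity on `[a, b]`, and the mean value theorem makes it constant there.
-/

theorem Convex.eq_of_hasDerivAt_eq_zero {D : Set ℝ} (hD : Convex ℝ D) {f : ℝ → ℝ}
    (hf : ContinuousOn f D) (hf' : ∀ x ∈ interior D, HasDerivAt f 0 x) :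
    ∀ x ∈ D, ∀ y ∈ D, f x = f y := by
  have hdiff : DifferentiableOn ℝ f (interior D) := fun x hx =>
    (hf' x hx).differentiableAt.differentiableWithinAt
  have hmono := monotoneOn_of_deriv_nonneg hD hf hdiff fun x hx => (hf' x hx).deriv.ge
  have hanti := antitoneOn_of_deriv_nonpos hD hf hdiff fun x hx => (hf' x hx).deriv.le
  intro x hx y hy
  rcases le_total x y with hxy | hyx
  · exact le_antisymm (hmono hx hy hxy) (hanti hx hy hxy)
  · exact le_antisymm (hanti hy hx hyx) (hmono hy hx hyx)

theorem continuous_gradient_snd {X H : Type*} [NormedAddCommGroup X] [NormedSpace ℝ X]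
    [NormedAddCommGroup H] [InnerProductSpace ℝ H] [CompleteSpace H]
    {f : X → H → ℝ} {g : X → H → H} (hf : ContDiff ℝ 1 fun p : X × H => f p.1 p.2)
    (hg : ∀ x v, HasGradientAt (f x) (g x v) v) :
    Continuous fun p : X × H => g p.1 p.2 := by
  -- `g x v` is the Riesz representative of the full derivative restricted to the factor `H`.
  have hg_eq : (fun p : X × H => g p.1 p.2) = fun p =>
      (toDual ℝ H).symm ((fderiv ℝ (fun p : X × H => f p.1 p.2) p).comp (.inr ℝ X H)) := by
    funext ⟨x, v⟩
    have hfx : HasFDerivAt (f x) ((fderiv ℝ (fun p : X × H => f p.1 p.2) (x, v)).comp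
        (.inr ℝ X H)) v :=
      (hf.differentiable one_ne_zero (x, v)).hasFDerivAt.comp v (hasFDerivAt_prodMk_right x v)
    rw [← (hg x v).hasFDerivAt.unique hfx, LinearIsometryEquiv.symm_apply_apply]
  rw [hg_eq]
  exact (toDual ℝ H).symm.continuous.comp
    ((hf.continuous_fderiv one_ne_zero).clm_comp continuous_const)

theorem noether_real_general (n : ℕ) (a b : ℝ)
    (L : ℝ → EuclideanSpace ℝ (Fin n) → EuclideanSpace ℝ (Fin n) → ℝ)
    (L1 : ℝ → EuclideanSpace ℝ (Fin n) → EuclideanSpace ℝ (Fin n) → ℝ)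
    (L2 L3 : ℝ → EuclideanSpace ℝ (Fin n) → EuclideanSpace ℝ (Fin n) → EuclideanSpace ℝ (Fin n))
    (hL : ContDiff ℝ 1 (fun p : ℝ × EuclideanSpace ℝ (Fin n) × EuclideanSpace ℝ (Fin n) =>
      L p.1 p.2.1 p.2.2))
    (hL3 : ∀ t u v, HasGradientAt (fun v' => L t u v') (L3 t u v) v)
    (q : ℝ → EuclideanSpace ℝ (Fin n)) (hq : ContDiff ℝ 1 q)
    (hEL1 : ∀ t ∈ Ioo a b,
      HasDerivAt (fun s => L3 s (q s) (deriv q s)) (L2 t (q t) (deriv q t)) t)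
    (hEL2 : ∀ t ∈ Ioo a b,
      HasDerivAt (fun s => -L s (q s) (deriv q s) + ⟪L3 s (q s) (deriv q s), deriv q s⟫)
        (-(L1 t (q t) (deriv q t))) t)
    (τ : ℝ → EuclideanSpace ℝ (Fin n) → ℝ) (ξ : ℝ → EuclideanSpace ℝ (Fin n) → EuclideanSpace ℝ (Fin n))
    (hτ : ContDiff ℝ 1 (fun p : ℝ × EuclideanSpace ℝ (Fin n) => τ p.1 p.2))
    (hξ : ContDiff ℝ 1 (fun p : ℝ × EuclideanSpace ℝ (Fin n) => ξ p.1 p.2))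
    (hinv : ∀ t ∈ Ioo a b,
      L1 t (q t) (deriv q t) * τ t (q t)
      + ⟪L2 t (q t) (deriv q t), ξ t (q t)⟫
      + ⟪L3 t (q t) (deriv q t), deriv (fun s => ξ s (q s)) t⟫
      + L t (q t) (deriv q t) * deriv (fun s => τ s (q s)) t
      - ⟪L3 t (q t) (deriv q t), deriv q t⟫ * deriv (fun s => τ s (q s)) t = 0) :
    ∀ s ∈ Icc a b, ∀ t ∈ Icc a b,
      ⟪L3 s (q s) (deriv q s), ξ s (q s)⟫
        + (L s (q s) (deriv q s) - ⟪L3 s (q s) (deriv q s), deriv q s⟫) * τ s (q s)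
      = ⟪L3 t (q t) (deriv q t), ξ t (q t)⟫
        + (L t (q t) (deriv q t) - ⟪L3 t (q t) (deriv q t), deriv q t⟫) * τ t (q t) := by
  have hq' : Continuous (deriv q) := hq.continuous_deriv le_rfl
  have hp : Continuous fun s => L3 s (q s) (deriv q s) :=
    (continuous_gradient_snd (X := ℝ × EuclideanSpace ℝ (Fin n)) (f := fun x v => L x.1 x.2 v) (g := fun x v => L3 x.1 x.2 v)
      (hL.comp (ContinuousLinearEquiv.prodAssoc ℝ ℝ _ _).contDiff)
      fun x => hL3 x.1 x.2).comp ((continuous_id.prodMk hq.continuous).prodMk hq')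
  have hξq : ContDiff ℝ 1 fun s => ξ s (q s) := hξ.comp (contDiff_id.prodMk hq)
  have hτq : ContDiff ℝ 1 fun s => τ s (q s) := hτ.comp (contDiff_id.prodMk hq)
  have hE : ∀ t ∈ Ioo a b, HasDerivAt
      (fun s => L s (q s) (deriv q s) - ⟪L3 s (q s) (deriv q s), deriv q s⟫)
      (L1 t (q t) (deriv q t)) t := fun t ht => by
    simpa only [Pi.neg_def, neg_add, neg_neg, ← sub_eq_add_neg] using (hEL2 t ht).neg
  refine (convex_Icc a b).eq_of_hasDerivAt_eq_zero (Continuous.continuousOn ?_) fun t ht => ?_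
  · exact (hp.inner hξq.continuous).add
      (((hL.continuous.comp (continuous_id.prodMk (hq.continuous.prodMk hq'))).sub
        (hp.inner hq')).mul hτq.continuous)
  · rw [interior_Icc] at ht
    exact (((hEL1 t ht).inner ℝ (hξq.differentiable one_ne_zero t).hasDerivAt).add
      ((hE t ht).mul (hτq.differentiable one_ne_zero t).hasDerivAt)).congr_deriv
      (by linear_combination hinv t ht)

theorem noether_real (n : ℕ) (a b : ℝ) (hab : a < b)
    (L : ℝ → EuclideanSpace ℝ (Fin n) → EuclideanSpace ℝ (Fin n) → ℝ)
    (L1 : ℝ → EuclideanSpace ℝ (Fin n) → EuclideanSpace ℝ (Fin n) → ℝ)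
    (L2 L3 : ℝ → EuclideanSpace ℝ (Fin n) → EuclideanSpace ℝ (Fin n) → EuclideanSpace ℝ (Fin n))
    (hL : ContDiff ℝ 1 (fun p : ℝ × EuclideanSpace ℝ (Fin n) × EuclideanSpace ℝ (Fin n) =>
      L p.1 p.2.1 p.2.2))
    (hL1 : ∀ t u v, HasDerivAt (fun s => L s u v) (L1 t u v) t)
    (hL2 : ∀ t u v, HasGradientAt (fun u' => L t u' v) (L2 t u v) u)
    (hL3 : ∀ t u v, HasGradientAt (fun v' => L t u v') (L3 t u v) v)
    (q : ℝ → EuclideanSpace ℝ (Fin n)) (hq : ContDiff ℝ 1 q)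
    (hEL1 : ∀ t ∈ Ioo a b,
      HasDerivAt (fun s => L3 s (q s) (deriv q s)) (L2 t (q t) (deriv q t)) t)
    (hEL2 : ∀ t ∈ Ioo a b,
      HasDerivAt (fun s => -L s (q s) (deriv q s) + ⟪L3 s (q s) (deriv q s), deriv q s⟫)
        (-(L1 t (q t) (deriv q t))) t)
    (τ : ℝ → EuclideanSpace ℝ (Fin n) → ℝ) (ξ : ℝ → EuclideanSpace ℝ (Fin n) → EuclideanSpace ℝ (Fin n))
    (hτ : ContDiff ℝ 1 (fun p : ℝ × EuclideanSpace ℝ (Fin n) => τ p.1 p.2))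
    (hξ : ContDiff ℝ 1 (fun p : ℝ × EuclideanSpace ℝ (Fin n) => ξ p.1 p.2))
    (hinv : ∀ t ∈ Ioo a b,
      L1 t (q t) (deriv q t) * τ t (q t)
      + ⟪L2 t (q t) (deriv q t), ξ t (q t)⟫
      + ⟪L3 t (q t) (deriv q t), deriv (fun s => ξ s (q s)) t⟫
      + L t (q t) (deriv q t) * deriv (fun s => τ s (q s)) t
      - ⟪L3 t (q t) (deriv q t), deriv q t⟫ * deriv (fun s => τ s (q s)) t = 0) :
    ∀ s ∈ Icc a b, ∀ t ∈ Icc a b,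
      ⟪L3 s (q s) (deriv q s), ξ s (q s)⟫
        + (L s (q s) (deriv q s) - ⟪L3 s (q s) (deriv q s), deriv q s⟫) * τ s (q s)
      = ⟪L3 t (q t) (deriv q t), ξ t (q t)⟫
        + (L t (q t) (deriv q t) - ⟪L3 t (q t) (deriv q t), deriv q t⟫) * τ t (q t) :=
  noether_real_general n a b L L1 L2 L3 hL hL3 q hq hEL1 hEL2 τ ξ hτ hξ hinv
end
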